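/- arXiv:2004.05931 — 2 statements merged into one kernel-verified Lean document; each statement's English description precedes it below -/
import Mathlib

section
/- Young-type paraproduct/convolution estimate on Besov spaces: for p, q, r ∈ [1,∞] with 1/r = 1/p + 1/q − 1 and α, β ∈ ℝ, the convolution of φ ∈ B^α_{p,∞}(𝕋^d) and ψ ∈ B^β_{q,∞}(𝕋^d) satisfies ‖φ * ψ‖_{B^{α+β}_{r,∞}} ≲ ‖φ‖_{B^α_{p,∞}} ‖ψ‖_{B^β_{q,∞}}. -/
open MeasureTheory Real Filter
open scoped ENNReal NNReal

noncomputable section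

/-- `Vec d` is `ℝ^d`. -/
abbrev Vec (d : ℕ) := Fin d → ℝ

/-- Euclidean norm on `ℝ^d`. -/
def enorm' {d : ℕ} (x : Vec d) : ℝ := Real.sqrt (∑ i, (x i)^2)

/-- Euclidean inner product on `ℝ^d`. -/
def dot {d : ℕ} (x y : Vec d) : ℝ := ∑ i, x i * y i

/-- `e^{it}`. -/
def expi (t : ℝ) : ℂ := Complex.exp (Complex.I * t)

/-- The Fourier character `e^{2π i k·x}` on the torus. -/
def character {d : ℕ} (k : Fin d → ℤ) (x : Vec d) : ℂ :=
  expi (2 * π * dot (fun i => (k i : ℝ)) x)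

/-- The fundamental domain `[0,1)^d` of the torus `𝕋^d`. -/
def unitCube (d : ℕ) : Set (Vec d) := {x | ∀ i, x i ∈ Set.Ico (0:ℝ) 1}

/-- Fourier coefficient of a (1-periodic) function on `𝕋^d`. -/
def tcoeff {d : ℕ} (f : Vec d → ℂ) (k : Fin d → ℤ) : ℂ :=
  ∫ x in unitCube d, f x * expi (-(2 * π * dot (fun i => (k i : ℝ)) x))

/-- Fourier multiplier with symbol `m` acting on (periodic) functions. -/
def mult {d : ℕ} (m : (Fin d → ℤ) → ℂ) (f : Vec d → ℂ) : Vec d → ℂ :=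
  fun x => ∑' k : Fin d → ℤ, m k * tcoeff f k * character k x

/-- Convolution of two functions on the torus (defined spectrally). -/
def torusConv {d : ℕ} (f g : Vec d → ℂ) : Vec d → ℂ :=
  fun x => ∑' k : Fin d → ℤ, tcoeff f k * tcoeff g k * character k x

/-- Radius of the Euclidean ball of Lebesgue measure one in `ℝ^d`. -/
def uballRad (d : ℕ) : ℝ := ((volume {x : Vec d | enorm' x < 1}).toReal) ^ (-(1:ℝ)/d)

/-- The Euclidean ball of volume one centered at the origin. -/
def uball (d : ℕ) : Set (Vec d) := {x | enorm' x < uballRad d}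

/-- `χ̂(k) = ⨍_B e^{-2πi⟨k,x⟩}dx`, the Fourier transform of the normalized
indicator of the ball of volume one. -/
def chiHat {d : ℕ} (k : Vec d) : ℂ :=
  ((volume (uball d)).toReal)⁻¹ • ∫ x in uball d, expi (-(2 * π * dot k x))

/-- Symbol `ϑ_n(k) = n²(χ̂⁴(k/n) - 1)` of the semidiscrete Laplacian. -/
def thetaSym (d n : ℕ) (k : Fin d → ℤ) : ℝ :=
  (n:ℝ)^2 * (((chiHat (fun i => (k i : ℝ) / n) : ℂ).re)^4 - 1)

/-- A dyadic Littlewood–Paley partition of unity on `ℝ^d`.  The index `j : ℕ`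
corresponds to the paper's index `j - 1 ∈ {-1, 0, 1, …}`. -/
structure DyadicPartition (d : ℕ) where
  ρ : ℕ → Vec d → ℝ
  c1 : ℝ
  c2 : ℝ
  hc1 : 0 < c1
  hc12 : c1 < c2
  smooth : ∀ j, ContDiff ℝ (⊤ : ℕ∞) (ρ j)
  radial : ∀ j x y, enorm' x = enorm' y → ρ j x = ρ j y
  supp_ball : ∀ x, c2 < enorm' x → ρ 0 x = 0
  supp_ann : ∀ j, 1 ≤ j → ∀ x,
      (enorm' x < c1 * 2^(j-1) ∨ c2 * 2^(j-1) < enorm' x) → ρ j x = 0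
  scaling : ∀ j, 1 ≤ j → ∀ x, ρ (j+1) x = ρ j (fun i => x i / 2)
  total : ∀ x, ∑' j, ρ j x = 1

/-- Littlewood–Paley block `Δ_{j-1}` (paper indexing). -/
def block {d : ℕ} (P : DyadicPartition d) (j : ℕ) (f : Vec d → ℂ) : Vec d → ℂ :=
  mult (fun k => (P.ρ j (fun i => (k i : ℝ)) : ℂ)) f

/-- `L^p` norm on the torus. -/
def torusLp {d : ℕ} (p : ℝ≥0∞) (f : Vec d → ℂ) : ℝ≥0∞ :=
  eLpNorm f p (volume.restrict (unitCube d))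

/-- Besov norm `‖f‖_{B^α_{p,∞}} = sup_j 2^{αj} ‖Δ_j f‖_{L^p}` (paper index `j-1`). -/
def besov {d : ℕ} (P : DyadicPartition d) (α : ℝ) (p : ℝ≥0∞) (f : Vec d → ℂ) : ℝ≥0∞ :=
  ⨆ j : ℕ, ENNReal.ofReal ((2:ℝ) ^ (α * ((j:ℝ) - 1))) * torusLp p (block P j f)

/-- `S_{i}` : sum of the blocks of (internal) index `< i`. -/
def lowBlock {d : ℕ} (P : DyadicPartition d) (i : ℕ) (f : Vec d → ℂ) : Vec d → ℂ :=
  fun x => ∑ j ∈ Finset.range i, block P j f x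

/-- Paraproduct `f ≺ g = Σ_i S_{i-1} f · Δ_i g`. -/
def para {d : ℕ} (P : DyadicPartition d) (f g : Vec d → ℂ) : Vec d → ℂ :=
  fun x => ∑' i : ℕ, lowBlock P (i-1) f x * block P i g x

/-- Resonant product `f ⊙ g = Σ_{|i-j|≤1} Δ_i f · Δ_j g`. -/
def reso {d : ℕ} (P : DyadicPartition d) (f g : Vec d → ℂ) : Vec d → ℂ :=
  fun x => ∑' i : ℕ, block P i f x * ∑ j ∈ Finset.Icc (i-1) (i+1), block P j g x

/-- Symbol of the ball-averaging operator `Π_n`. -/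
def PinSym (d n : ℕ) (k : Fin d → ℤ) : ℂ := chiHat (fun i => (k i : ℝ) / n)

/-- The operator `Π_n²`. -/
def Pi2 {d : ℕ} (n : ℕ) (f : Vec d → ℂ) : Vec d → ℂ :=
  mult (fun k => (PinSym d n k)^2) f

namespace BesovAux

open scoped BigOperators

variable {d : ℕ}

/-! ### Basic facts about the cube -/

lemma unitCube_eq (d : ℕ) :
    unitCube d = Set.pi Set.univ (fun _ : Fin d => Set.Ico (0:ℝ) 1) := by
  ext x; simp [unitCube, Set.mem_pi]

lemma measurableSet_unitCube (d : ℕ) : MeasurableSet (unitCube d) := by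
  rw [unitCube_eq]; exact MeasurableSet.univ_pi (fun _ => measurableSet_Ico)

lemma volume_unitCube (d : ℕ) : volume (unitCube d) = 1 := by
  rw [unitCube_eq, volume_pi_pi]; simp

/-- The torus measure. -/
abbrev tmeas (d : ℕ) : Measure (Vec d) := volume.restrict (unitCube d)

instance : IsProbabilityMeasure (tmeas d) :=
  ⟨by rw [Measure.restrict_apply_univ]; exact volume_unitCube d⟩

/-! ### Characters -/

/-- Cast of a lattice point to `ℝ^d`. -/
def zc (k : Fin d → ℤ) : Vec d := fun i => (k i : ℝ)

lemma expi_add (s t : ℝ) : expi (s + t) = expi s * expi t := by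
  rw [expi, expi, expi, ← Complex.exp_add]; congr 1; push_cast; ring

lemma expi_sum {ι : Type*} (s : Finset ι) (a : ι → ℝ) :
    expi (∑ i ∈ s, a i) = ∏ i ∈ s, expi (a i) := by
  classical
  induction s using Finset.induction with
  | empty => simp [expi]
  | insert _ _ h ih => rw [Finset.sum_insert h, Finset.prod_insert h, expi_add, ih]

lemma norm_expi (t : ℝ) : ‖expi t‖ = 1 := by
  rw [expi, Complex.norm_exp]
  simp

lemma norm_character (k : Fin d → ℤ) (x : Vec d) : ‖character k x‖ = 1 := norm_expi _

lemma character_mul (a b : Fin d → ℤ) (x : Vec d) :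
    character a x * character b x = character (a + b) x := by
  rw [character, character, character, ← expi_add]
  congr 1
  rw [← mul_add]
  congr 1
  simp only [dot, Pi.add_apply, Int.cast_add, add_mul, Finset.sum_add_distrib]

lemma expi_neg_dot (k : Fin d → ℤ) (x : Vec d) :
    expi (-(2 * π * dot (fun i => (k i : ℝ)) x)) = character (-k) x := by
  rw [character]
  congr 1
  have : dot (fun i => ((-k) i : ℝ)) x = -dot (fun i => (k i : ℝ)) x := by
    simp [dot, ← Finset.sum_neg_distrib, neg_mul]
  rw [this]; ring

lemma tcoeff_eq_char (f : Vec d → ℂ) (k : Fin d → ℤ) :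
    tcoeff f k = ∫ x in unitCube d, f x * character (-k) x := by
  unfold tcoeff; congr 1; funext x; rw [expi_neg_dot]

lemma continuous_character (k : Fin d → ℤ) : Continuous (character k) := by
  apply Continuous.comp Complex.continuous_exp
  apply Continuous.mul continuous_const
  apply Complex.continuous_ofReal.comp
  apply Continuous.mul continuous_const
  exact continuous_finset_sum _ (fun i _ => (continuous_const.mul (continuous_apply i)))

lemma character_prod (n : Fin d → ℤ) (x : Vec d) :
    character n x = ∏ i, expi (2 * π * (n i : ℝ) * x i) := by
  rw [character, ← expi_sum]
  congr 1
  rw [dot, Finset.mul_sum]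
  exact Finset.sum_congr rfl fun i _ => by ring

lemma character_int_period (k ε : Fin d → ℤ) (x : Vec d) :
    character k (fun i => x i + (ε i : ℝ)) = character k x := by
  have h : (fun i => x i + (ε i : ℝ)) = x + zc ε := by funext i; rfl
  have h2 : character k (x + zc ε) = character k x * character k (zc ε) := by
    rw [character, character, character, ← expi_add]
    congr 1
    have : dot (fun i => (k i:ℝ)) (x + zc ε) =
        dot (fun i => (k i:ℝ)) x + dot (fun i => (k i:ℝ)) (zc ε) := by
      simp only [dot, zc, Pi.add_apply, mul_add, Finset.sum_add_distrib]
    rw [this]; ring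
  have h3 : character k (zc ε) = 1 := by
    rw [character]
    have : dot (fun i => (k i:ℝ)) (zc ε) = ((∑ i, k i * ε i : ℤ) : ℝ) := by
      simp [dot, zc]
    rw [this, expi]
    have : Complex.I * ((2 * π * ((∑ i, k i * ε i : ℤ) : ℝ) : ℝ) : ℂ)
        = ((∑ i, k i * ε i : ℤ) : ℂ) * (2 * (π:ℂ) * Complex.I) := by push_cast; ring
    rw [this, Complex.exp_int_mul_two_pi_mul_I]
  rw [h, h2, h3, mul_one]

/-! ### Integrals of characters over the cube -/

lemma integral_expi_Ico (c : ℤ) :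
    (∫ t in Set.Ico (0:ℝ) 1, expi (2 * π * (c:ℝ) * t)) = if c = 0 then 1 else 0 := by
  rcases eq_or_ne c 0 with hc | hc
  · subst hc
    simp only [Int.cast_zero, mul_zero, zero_mul]
    rw [show (fun _ : ℝ => expi 0) = fun _ : ℝ => (1:ℂ) from funext fun _ => by
      simp [expi]]
    simp [Real.volume_Ico]
  · have hK : (2 * (π:ℂ) * (c:ℂ) * Complex.I) ≠ 0 := by
      apply mul_ne_zero (mul_ne_zero (mul_ne_zero two_ne_zero _) _) Complex.I_ne_zero
      · exact_mod_cast Complex.ofReal_ne_zero.mpr Real.pi_ne_zero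
      · exact_mod_cast Int.cast_ne_zero.mpr hc
    have h1 : (∫ t in Set.Ico (0:ℝ) 1, expi (2 * π * (c:ℝ) * t))
        = ∫ t in (0:ℝ)..1, Complex.exp ((2 * (π:ℂ) * (c:ℂ) * Complex.I) * (t:ℂ)) := by
      rw [MeasureTheory.setIntegral_congr_set MeasureTheory.Ico_ae_eq_Ioc,
        ← intervalIntegral.integral_of_le zero_le_one]
      apply intervalIntegral.integral_congr
      intro t _
      simp only [expi]
      congr 1
      push_cast
      ring
    rw [h1, integral_exp_mul_complex hK]
    have h2 : Complex.exp ((2 * (π:ℂ) * (c:ℂ) * Complex.I) * (1:ℝ)) = 1 := by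
      have : (2 * (π:ℂ) * (c:ℂ) * Complex.I) * ((1:ℝ):ℂ) = (c:ℂ) * (2 * (π:ℂ) * Complex.I) := by
        push_cast; ring
      rw [this, Complex.exp_int_mul_two_pi_mul_I]
    have h3 : Complex.exp ((2 * (π:ℂ) * (c:ℂ) * Complex.I) * ((0:ℝ):ℂ)) = 1 := by
      simp
    rw [h2, h3, if_neg hc, sub_self, zero_div]

lemma integral_character (n : Fin d → ℤ) :
    (∫ x in unitCube d, character n x) = if n = 0 then 1 else 0 := by
  classical
  rw [← MeasureTheory.integral_indicator (measurableSet_unitCube d)]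
  have hpt : (unitCube d).indicator (character n)
      = fun x => ∏ i, (Set.Ico (0:ℝ) 1).indicator (fun t => expi (2 * π * (n i : ℝ) * t)) (x i) := by
    funext x
    by_cases hx : x ∈ unitCube d
    · rw [Set.indicator_of_mem hx, character_prod]
      exact Finset.prod_congr rfl fun i _ =>
        (Set.indicator_of_mem (hx i) (fun t => expi (2 * π * (n i : ℝ) * t))).symm
    · rw [Set.indicator_of_notMem hx]
      obtain ⟨i, hi⟩ := not_forall.mp hx
      exact (Finset.prod_eq_zero (Finset.mem_univ i) (Set.indicator_of_notMem hi _)).symm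
  rw [hpt, MeasureTheory.integral_fintype_prod_volume_eq_prod (ι := Fin d)
    (f := fun i t => (Set.Ico (0:ℝ) 1).indicator (fun u => expi (2 * π * (n i : ℝ) * u)) t)]
  simp_rw [MeasureTheory.integral_indicator measurableSet_Ico, integral_expi_Ico]
  by_cases h : n = 0
  · subst h; simp
  · rw [if_neg h]
    obtain ⟨i, hi⟩ := Function.ne_iff.mp h
    refine Finset.prod_eq_zero (Finset.mem_univ i) ?_
    rw [if_neg]
    simpa using hi

lemma integrableOn_unitCube {f : Vec d → ℂ} (hf : Continuous f) (M : ℝ)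
    (hM : ∀ x, ‖f x‖ ≤ M) : MeasureTheory.IntegrableOn f (unitCube d) volume :=
  MeasureTheory.Integrable.mono' (MeasureTheory.integrable_const M)
    hf.aestronglyMeasurable (Filter.Eventually.of_forall hM)

lemma tcoeff_character (k m : Fin d → ℤ) :
    tcoeff (character k) m = if k = m then 1 else 0 := by
  rw [tcoeff_eq_char]
  have : ∀ x, character k x * character (-m) x = character (k + -m) x :=
    fun x => character_mul k (-m) x
  calc (∫ x in unitCube d, character k x * character (-m) x)
      = ∫ x in unitCube d, character (k + -m) x := by
        apply MeasureTheory.integral_congr_ae; exact Filter.Eventually.of_forall (fun x => this x)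
    _ = if k + -m = 0 then 1 else 0 := integral_character _
    _ = if k = m then 1 else 0 := by
        congr 1
        simp [add_neg_eq_zero]

/-! ### Trigonometric polynomials -/

/-- A trigonometric polynomial. -/
def trig (S : Finset (Fin d → ℤ)) (c : (Fin d → ℤ) → ℂ) : Vec d → ℂ :=
  fun x => ∑ k ∈ S, c k * character k x

lemma continuous_trig (S : Finset (Fin d → ℤ)) (c : (Fin d → ℤ) → ℂ) :
    Continuous (trig S c) :=
  continuous_finset_sum _ (fun k _ => continuous_const.mul (continuous_character k))

lemma norm_trig_le (S : Finset (Fin d → ℤ)) (c : (Fin d → ℤ) → ℂ) (x : Vec d) :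
    ‖trig S c x‖ ≤ ∑ k ∈ S, ‖c k‖ := by
  refine le_trans (norm_sum_le _ _) ?_
  apply Finset.sum_le_sum
  intro k _
  rw [norm_mul, norm_character, mul_one]

lemma trig_periodic (S : Finset (Fin d → ℤ)) (c : (Fin d → ℤ) → ℂ) (ε : Fin d → ℤ)
    (x : Vec d) : trig S c (fun i => x i + (ε i : ℝ)) = trig S c x := by
  unfold trig
  exact Finset.sum_congr rfl fun k _ => by rw [character_int_period]

lemma tcoeff_trig (S : Finset (Fin d → ℤ)) (c : (Fin d → ℤ) → ℂ) (m : Fin d → ℤ) :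
    tcoeff (trig S c) m = if m ∈ S then c m else 0 := by
  classical
  rw [tcoeff_eq_char]
  have h1 : (∫ x in unitCube d, trig S c x * character (-m) x)
      = ∑ k ∈ S, ∫ x in unitCube d, c k * (character k x * character (-m) x) := by
    rw [← MeasureTheory.integral_finset_sum]
    · congr 1; funext x; rw [trig, Finset.sum_mul]
      exact Finset.sum_congr rfl fun k _ => by ring
    · intro k _
      apply integrableOn_unitCube
      · exact continuous_const.mul ((continuous_character k).mul (continuous_character (-m)))
      · intro x
        rw [norm_mul, norm_mul, norm_character, norm_character, mul_one, mul_one]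
  rw [h1]
  have h2 : ∀ k ∈ S, (∫ x in unitCube d, c k * (character k x * character (-m) x))
      = c k * (if k = m then 1 else 0) := by
    intro k _
    rw [MeasureTheory.integral_const_mul]
    congr 1
    rw [← tcoeff_character k m, tcoeff_eq_char]
  rw [Finset.sum_congr rfl h2]
  simp only [mul_ite, mul_one, mul_zero]
  rw [Finset.sum_ite_eq' S m (fun k => c k)]

/-! ### Lattice supports -/

lemma abs_coord_le_enorm' (x : Vec d) (i : Fin d) : |x i| ≤ enorm' x := by
  rw [enorm']
  have h0 : |x i| = Real.sqrt ((x i)^2) := (Real.sqrt_sq_eq_abs (x i)).symm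
  rw [h0]
  apply Real.sqrt_le_sqrt
  exact Finset.single_le_sum (f := fun j => (x j)^2) (fun j _ => sq_nonneg _)
    (Finset.mem_univ i)

lemma latticeFinite (R : ℝ) : Set.Finite {k : Fin d → ℤ | enorm' (zc k) ≤ R} := by
  classical
  apply Set.Finite.subset (Set.Finite.pi (fun _ : Fin d => Set.finite_Icc (-⌈R⌉) ⌈R⌉))
  intro k hk
  simp only [Set.mem_pi, Set.mem_univ, Set.mem_Icc, forall_true_left]
  intro i
  have h1 : |(k i : ℝ)| ≤ R := le_trans (abs_coord_le_enorm' (zc k) i) hk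
  have h2 : ((k i : ℝ)) ≤ (⌈R⌉ : ℝ) := le_trans (le_abs_self _) (h1.trans (Int.le_ceil R))
  have h3 : (-(⌈R⌉:ℝ)) ≤ (k i : ℝ) := by
    have := (neg_abs_le ((k i : ℝ))).trans' (neg_le_neg (h1.trans (Int.le_ceil R)))
    linarith [neg_abs_le ((k i:ℝ)), neg_le_neg (h1.trans (Int.le_ceil R))]
  constructor
  · exact_mod_cast h3
  · exact_mod_cast h2

/-- Lattice points where `ρ_j` can be nonzero. -/
def suppFinset (P : DyadicPartition d) (j : ℕ) : Finset (Fin d → ℤ) :=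
  (latticeFinite (P.c2 * 2^j)).toFinset

lemma c2_pos (P : DyadicPartition d) : 0 < P.c2 := lt_trans P.hc1 P.hc12

lemma rho_zero_of_not_mem (P : DyadicPartition d) (j : ℕ) {k : Fin d → ℤ}
    (h : k ∉ suppFinset P j) : P.ρ j (zc k) = 0 := by
  rw [suppFinset, Set.Finite.mem_toFinset, Set.mem_setOf_eq, not_le] at h
  rcases Nat.eq_zero_or_pos j with hj | hj
  · subst hj
    apply P.supp_ball
    calc P.c2 = P.c2 * 1 := (mul_one _).symm
    _ ≤ P.c2 * 2^0 := by norm_num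
    _ < enorm' (zc k) := h
  · apply P.supp_ann j hj
    right
    calc P.c2 * 2^(j-1) ≤ P.c2 * 2^j := by
          apply mul_le_mul_of_nonneg_left _ (le_of_lt (c2_pos P))
          exact pow_le_pow_right₀ one_le_two (Nat.sub_le j 1)
    _ < enorm' (zc k) := h

lemma block_eq_trig (P : DyadicPartition d) (j : ℕ) (f : Vec d → ℂ) :
    block P j f = trig (suppFinset P j) (fun k => (P.ρ j (zc k) : ℂ) * tcoeff f k) := by
  funext x
  rw [block, mult, trig]
  rw [tsum_eq_sum (s := suppFinset P j) ?hvan]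
  · exact Finset.sum_congr rfl fun k _ => by rw [show P.ρ j (zc k) = P.ρ j fun i => ((k i:ℝ)) from rfl, mul_assoc]
  case hvan =>
    intro k hk
    have h0 : P.ρ j (zc k) = 0 := rho_zero_of_not_mem P j hk
    rw [show (P.ρ j fun i => ((k i : ℝ))) = 0 from h0]
    simp

/-! ### Partition combinatorics -/

lemma rho_ne_upper (P : DyadicPartition d) {j : ℕ} {y : Vec d} (h : P.ρ j y ≠ 0) :
    enorm' y ≤ P.c2 * 2^(j-1) := by
  by_contra hc
  push_neg at hc
  rcases Nat.eq_zero_or_pos j with hj | hj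
  · subst hj
    apply h
    apply P.supp_ball
    simpa using hc
  · exact h (P.supp_ann j hj y (Or.inr hc))

lemma rho_ne_lower (P : DyadicPartition d) {j : ℕ} (hj : 1 ≤ j) {y : Vec d}
    (h : P.ρ j y ≠ 0) : P.c1 * 2^(j-1) ≤ enorm' y := by
  by_contra hc
  push_neg at hc
  exact h (P.supp_ann j hj y (Or.inl hc))

lemma rho_disjoint (P : DyadicPartition d) (L : ℕ) (hL : P.c2 < P.c1 * 2^L)
    {j i : ℕ} {k : Fin d → ℤ} (hj : P.ρ j (zc k) ≠ 0)
    (hi : i ∉ Finset.Icc (j - L) (j + L)) : P.ρ i (zc k) = 0 := by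
  rw [Finset.mem_Icc, not_and_or, not_le, not_le] at hi
  have h2le : ∀ a b : ℕ, a ≤ b → (2:ℝ)^a ≤ 2^b := fun a b hab =>
    pow_le_pow_right₀ one_le_two hab
  rcases hi with hi | hi
  · -- i < j - L, so j ≥ i + L + 1 and j ≥ 1
    have hjL : i + L + 1 ≤ j := by omega
    have hj1 : 1 ≤ j := by omega
    have hlow : P.c1 * 2^(j-1) ≤ enorm' (zc k) := rho_ne_lower P hj1 hj
    rcases Nat.eq_zero_or_pos i with hi0 | hi1
    · subst hi0
      apply P.supp_ball
      calc P.c2 < P.c1 * 2^L := hL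
      _ ≤ P.c1 * 2^(j-1) := by
          apply mul_le_mul_of_nonneg_left (h2le _ _ (by omega)) (le_of_lt P.hc1)
      _ ≤ enorm' (zc k) := hlow
    · apply P.supp_ann i hi1
      right
      calc P.c2 * 2^(i-1) < (P.c1 * 2^L) * 2^(i-1) := by
            apply mul_lt_mul_of_pos_right hL (by positivity)
      _ = P.c1 * 2^(L + (i-1)) := by rw [pow_add]; ring
      _ ≤ P.c1 * 2^(j-1) := by
            apply mul_le_mul_of_nonneg_left (h2le _ _ (by omega)) (le_of_lt P.hc1)
      _ ≤ enorm' (zc k) := hlow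
  · -- j + L < i
    have hi1 : 1 ≤ i := by omega
    apply P.supp_ann i hi1
    left
    calc enorm' (zc k) ≤ P.c2 * 2^(j-1) := rho_ne_upper P hj
    _ < (P.c1 * 2^L) * 2^(j-1) := by
        apply mul_lt_mul_of_pos_right hL (by positivity)
    _ = P.c1 * 2^(L + (j-1)) := by rw [pow_add]; ring
    _ ≤ P.c1 * 2^(i-1) := by
        apply mul_le_mul_of_nonneg_left (h2le _ _ (by omega)) (le_of_lt P.hc1)

lemma rho_sum_J (P : DyadicPartition d) (L : ℕ) (hL : P.c2 < P.c1 * 2^L)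
    {j : ℕ} {k : Fin d → ℤ} (hj : P.ρ j (zc k) ≠ 0) :
    ∑ i ∈ Finset.Icc (j - L) (j + L), P.ρ i (zc k) = 1 := by
  have htot := P.total (zc k)
  rwa [tsum_eq_sum (s := Finset.Icc (j - L) (j + L))
    (fun i hi => rho_disjoint P L hL hj hi)] at htot

/-! ### Convolution identities -/

lemma character_sub (m : Fin d → ℤ) (x y : Vec d) :
    character m (x - y) = character m x * character (-m) y := by
  rw [← expi_neg_dot, character, character, ← expi_add]
  congr 1
  have : dot (fun i => (m i : ℝ)) (x - y)
      = dot (fun i => (m i : ℝ)) x - dot (fun i => (m i : ℝ)) y := by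
    simp only [dot, Pi.sub_apply, mul_sub, Finset.sum_sub_distrib]
  rw [this]; ring

lemma integral_char_char (k m : Fin d → ℤ) :
    (∫ y in unitCube d, character k y * character (-m) y) = if k = m then 1 else 0 := by
  have h : ∀ y, character k y * character (-m) y = character (k + -m) y :=
    fun y => character_mul k (-m) y
  rw [show (fun y => character k y * character (-m) y) = character (k + -m) from funext h]
  rw [integral_character]
  congr 1
  simp [add_neg_eq_zero]

lemma conv_trig (S T : Finset (Fin d → ℤ)) (c e : (Fin d → ℤ) → ℂ) (x : Vec d) :
    (∫ y in unitCube d, trig S c y * trig T e (x - y))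
      = ∑ k ∈ S ∩ T, (c k * e k) * character k x := by
  classical
  have h1 : ∀ y, trig S c y * trig T e (x - y)
      = ∑ k ∈ S, ∑ m ∈ T, (c k * e m * character m x) * (character k y * character (-m) y) := by
    intro y
    rw [trig, trig, Finset.sum_mul_sum]
    apply Finset.sum_congr rfl; intro k _
    apply Finset.sum_congr rfl; intro m _
    rw [character_sub]; ring
  rw [MeasureTheory.integral_congr_ae (Filter.Eventually.of_forall h1)]
  rw [MeasureTheory.integral_finset_sum]
  swap
  · intro k _
    apply MeasureTheory.integrable_finset_sum
    intro m _
    apply integrableOn_unitCube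
    · exact continuous_const.mul ((continuous_character k).mul (continuous_character (-m)))
    · intro y
      simp only [norm_mul, norm_character, mul_one]
      exact le_refl _
  have h2 : ∀ k ∈ S, (∫ y in unitCube d,
      ∑ m ∈ T, (c k * e m * character m x) * (character k y * character (-m) y))
      = if k ∈ T then (c k * e k) * character k x else 0 := by
    intro k _
    rw [MeasureTheory.integral_finset_sum]
    swap
    · intro m _
      apply integrableOn_unitCube
      · exact continuous_const.mul ((continuous_character k).mul (continuous_character (-m)))
      · intro y
        simp only [norm_mul, norm_character, mul_one]
        exact le_refl _
    have h3 : ∀ m ∈ T, (∫ y in unitCube d,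
        (c k * e m * character m x) * (character k y * character (-m) y))
        = if m = k then (c k * e k) * character k x else 0 := by
      intro m _
      rw [MeasureTheory.integral_const_mul, integral_char_char]
      rcases eq_or_ne k m with h | h
      · subst h; simp
      · rw [if_neg h, if_neg (Ne.symm h), mul_zero]
    rw [Finset.sum_congr rfl h3, Finset.sum_ite_eq' T k
      (fun _ => (c k * e k) * character k x)]
  rw [Finset.sum_congr rfl h2, Finset.sum_ite_mem, Finset.sum_congr rfl]
  exact fun k _ => rfl

/-! ### Coefficients of the convolution -/

lemma tcoeff_zero_fun (k : Fin d → ℤ) : tcoeff (fun _ => (0:ℂ)) k = 0 := by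
  simp [tcoeff]

lemma block_zero_fun (P : DyadicPartition d) (j : ℕ) :
    block P j (fun _ => (0:ℂ)) = fun _ => 0 := by
  funext x
  rw [block, mult]
  have : ∀ k : Fin d → ℤ, (P.ρ j (fun i => (k i:ℝ)) : ℂ) * tcoeff (fun _ => (0:ℂ)) k
      * character k x = 0 := by
    intro k; rw [tcoeff_zero_fun]; ring
  rw [tsum_congr this, tsum_zero]

lemma torusConv_of_not_summable {f g : Vec d → ℂ}
    (h : ¬ Summable fun k => ‖tcoeff f k * tcoeff g k‖) :
    torusConv f g = fun _ => 0 := by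
  funext x
  rw [torusConv]
  apply tsum_eq_zero_of_not_summable
  intro hs
  apply h
  have := (summable_norm_iff.mpr hs)
  have heq : ∀ k : Fin d → ℤ, ‖tcoeff f k * tcoeff g k * character k x‖
      = ‖tcoeff f k * tcoeff g k‖ := by
    intro k; rw [norm_mul, norm_character, mul_one]
  rwa [show (fun k : Fin d → ℤ => ‖tcoeff f k * tcoeff g k * character k x‖)
    = fun k => ‖tcoeff f k * tcoeff g k‖ from funext heq] at this

lemma tcoeff_torusConv {f g : Vec d → ℂ}
    (h : Summable fun k => ‖tcoeff f k * tcoeff g k‖) (m : Fin d → ℤ) :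
    tcoeff (torusConv f g) m = tcoeff f m * tcoeff g m := by
  classical
  rw [tcoeff_eq_char]
  have h1 : ∀ x, torusConv f g x * character (-m) x
      = ∑' k, (tcoeff f k * tcoeff g k * character k x) * character (-m) x := by
    intro x
    rw [torusConv, tsum_mul_right]
  rw [MeasureTheory.integral_congr_ae (Filter.Eventually.of_forall h1)]
  rw [MeasureTheory.integral_tsum]
  · have h2 : ∀ k, (∫ x in unitCube d,
        (tcoeff f k * tcoeff g k * character k x) * character (-m) x)
        = if k = m then tcoeff f m * tcoeff g m else 0 := by
      intro k
      have : ∀ x, (tcoeff f k * tcoeff g k * character k x) * character (-m) x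
          = (tcoeff f k * tcoeff g k) * (character k x * character (-m) x) := by
        intro x; ring
      rw [MeasureTheory.integral_congr_ae (Filter.Eventually.of_forall this),
        MeasureTheory.integral_const_mul, integral_char_char]
      rcases eq_or_ne k m with hkm | hkm
      · subst hkm; simp
      · rw [if_neg hkm, if_neg hkm, mul_zero]
    rw [tsum_congr h2, tsum_ite_eq]
  · intro k
    have : Continuous fun x => tcoeff f k * tcoeff g k * character k x * character (-m) x :=
      (continuous_const.mul (continuous_character k)).mul (continuous_character (-m))
    exact this.aestronglyMeasurable
  · have hev : ∀ k : Fin d → ℤ, (∫⁻ x in unitCube d,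
        ‖(tcoeff f k * tcoeff g k * character k x) * character (-m) x‖₊ ∂volume)
        = (‖tcoeff f k * tcoeff g k‖₊ : ℝ≥0∞) := by
      intro k
      have : ∀ x, (‖(tcoeff f k * tcoeff g k * character k x) * character (-m) x‖₊ : ℝ≥0∞)
          = (‖tcoeff f k * tcoeff g k‖₊ : ℝ≥0∞) := by
        intro x
        congr 1
        simp only [nnnorm_mul]
        rw [← nnnorm_mul]
        have e1 : ‖character k x‖₊ = 1 := by
          ext; rw [coe_nnnorm, norm_character]; rfl
        have e2 : ‖character (-m) x‖₊ = 1 := by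
          ext; rw [coe_nnnorm, norm_character]; rfl
        rw [nnnorm_mul, e1, e2]
        simp
      rw [MeasureTheory.lintegral_congr this, MeasureTheory.lintegral_const]
      simp [volume_unitCube]
    simp only [enorm_eq_nnnorm]; rw [tsum_congr hev]
    rw [ENNReal.tsum_coe_ne_top_iff_summable]
    exact NNReal.summable_coe.mp (by simpa [← NNReal.summable_coe, coe_nnnorm] using h)

/-! ### The key identity: blocks of a convolution -/

lemma vj_eq_trig (P : DyadicPartition d) (J : Finset ℕ) (g : Vec d → ℂ) :
    (fun x => ∑ i ∈ J, block P i g x)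
      = trig (J.biUnion (fun i => suppFinset P i))
          (fun k => (∑ i ∈ J, (P.ρ i (zc k) : ℂ)) * tcoeff g k) := by
  classical
  funext x
  have h1 : ∀ i ∈ J, block P i g x
      = ∑ k ∈ J.biUnion (fun i => suppFinset P i),
          ((P.ρ i (zc k) : ℂ) * tcoeff g k) * character k x := by
    intro i hi
    rw [block_eq_trig, trig]
    apply Finset.sum_subset (Finset.subset_biUnion_of_mem _ hi)
    intro k _ hk
    rw [rho_zero_of_not_mem P i hk]
    simp
  rw [Finset.sum_congr rfl h1, Finset.sum_comm, trig]
  apply Finset.sum_congr rfl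
  intro k _
  have h2 : ∀ i, ((P.ρ i (zc k) : ℂ) * tcoeff g k) * character k x
      = (P.ρ i (zc k) : ℂ) * (tcoeff g k * character k x) := fun i => by ring
  rw [Finset.sum_congr rfl (fun i _ => h2 i), ← Finset.sum_mul, mul_assoc]

/-- The sum of the blocks with indices in a window around `j`. -/
def Sblock (P : DyadicPartition d) (L j : ℕ) (g : Vec d → ℂ) : Vec d → ℂ :=
  fun z => ∑ i ∈ Finset.Icc (j - L) (j + L), block P i g z

lemma block_conv_key (P : DyadicPartition d) (L : ℕ) (hL : P.c2 < P.c1 * 2^L)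
    {f g : Vec d → ℂ} (hsum : Summable fun k => ‖tcoeff f k * tcoeff g k‖) (j : ℕ) :
    block P j (torusConv f g)
      = fun x => ∫ y in unitCube d, block P j f y * Sblock P L j g (x - y) := by
  classical
  funext x
  show block P j (torusConv f g) x
      = ∫ y in unitCube d, block P j f y
          * (∑ i ∈ Finset.Icc (j - L) (j + L), block P i g (x - y))
  set J := Finset.Icc (j - L) (j + L) with hJ
  have hjJ : j ∈ J := Finset.mem_Icc.mpr ⟨Nat.sub_le _ _, Nat.le_add_right _ _⟩
  set T := J.biUnion (fun i => suppFinset P i) with hT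
  set cv := fun k => (∑ i ∈ J, (P.ρ i (zc k) : ℂ)) * tcoeff g k with hcv
  have h2 : (∫ y in unitCube d, block P j f y * (∑ i ∈ J, block P i g (x - y)))
      = ∫ y in unitCube d,
          trig (suppFinset P j) (fun k => (P.ρ j (zc k) : ℂ) * tcoeff f k) y
          * trig T cv (x - y) := by
    apply MeasureTheory.integral_congr_ae
    apply Filter.Eventually.of_forall
    intro y
    have e1 : (∑ i ∈ J, block P i g (x - y)) = trig T cv (x - y) :=
      congrFun (vj_eq_trig P J g) (x - y)
    show block P j f y * (∑ i ∈ J, block P i g (x - y))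
        = trig (suppFinset P j) (fun k => (P.ρ j (zc k) : ℂ) * tcoeff f k) y
          * trig T cv (x - y)
    rw [block_eq_trig, e1]
  rw [h2, conv_trig]
  rw [block_eq_trig, trig]
  have hST : suppFinset P j ∩ T = suppFinset P j :=
    Finset.inter_eq_left.mpr (Finset.subset_biUnion_of_mem _ hjJ)
  rw [hST]
  apply Finset.sum_congr rfl
  intro k _
  rw [tcoeff_torusConv hsum]
  rcases eq_or_ne (P.ρ j (zc k)) 0 with h0 | h0
  · rw [h0]
    push_cast
    ring
  · have hs := rho_sum_J P L hL h0
    have hsum1 : (∑ i ∈ J, (P.ρ i (zc k) : ℂ)) = 1 := by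
      have : ((∑ i ∈ J, P.ρ i (zc k) : ℝ) : ℂ) = ((1:ℝ):ℂ) := by rw [hs]
      push_cast at this
      simpa using this
    rw [hcv]
    simp only [hsum1, one_mul]
    ring

/-! ### Periodic functions and translation estimates -/

def bigCube (d : ℕ) : Set (Vec d) := Set.pi Set.univ (fun _ : Fin d => Set.Ico (-1:ℝ) 1)

lemma measurableSet_bigCube : MeasurableSet (bigCube d) :=
  MeasurableSet.univ_pi fun _ => measurableSet_Ico

/-- Periodicity (period 1 in each coordinate). -/
def Per {E : Type*} (G : Vec d → E) : Prop :=
  ∀ (ε : Fin d → ℤ) (x : Vec d), G (fun i => x i + (ε i : ℝ)) = G x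

lemma lintegral_bigCube_le (G : Vec d → ℝ≥0∞) (hG : Measurable G) (hper : Per G) :
    (∫⁻ x in bigCube d, G x ∂volume) ≤ 2^d * ∫⁻ x in unitCube d, G x ∂volume := by
  classical
  have hcov : bigCube d ⊆ ⋃ b : Fin d → Bool,
      ((fun x : Vec d => x + fun i => (if b i then (1:ℝ) else 0)) ⁻¹' unitCube d) := by
    intro x hx
    classical
    refine Set.mem_iUnion.mpr ⟨fun i => if x i < 0 then true else false, ?_⟩
    intro i
    have hxi : x i ∈ Set.Ico (-1:ℝ) 1 := hx i (Set.mem_univ i)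
    obtain ⟨hl, hu⟩ := hxi
    show x i + (if (if x i < 0 then true else false) = true then (1:ℝ) else 0) ∈ Set.Ico (0:ℝ) 1
    by_cases hneg : x i < 0
    · rw [if_pos hneg, if_pos rfl]
      exact ⟨by linarith, by linarith⟩
    · push_neg at hneg
      rw [if_neg (not_lt.mpr hneg), if_neg (by simp)]
      exact ⟨by linarith, by linarith⟩
  calc (∫⁻ x in bigCube d, G x ∂volume)
      ≤ ∫⁻ x in ⋃ b : Fin d → Bool,
          ((fun x : Vec d => x + fun i => (if b i then (1:ℝ) else 0)) ⁻¹' unitCube d),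
          G x ∂volume := MeasureTheory.lintegral_mono_set hcov
    _ ≤ ∑' b : Fin d → Bool, ∫⁻ x in
          ((fun x : Vec d => x + fun i => (if b i then (1:ℝ) else 0)) ⁻¹' unitCube d),
          G x ∂volume := MeasureTheory.lintegral_iUnion_le _ _
    _ = ∑' _b : Fin d → Bool, ∫⁻ x in unitCube d, G x ∂volume := by
        apply tsum_congr
        intro b
        set c : Vec d := fun i => (if b i then (1:ℝ) else 0) with hc
        have hmp : MeasureTheory.MeasurePreserving (fun x : Vec d => x + c) volume volume :=
          MeasureTheory.measurePreserving_add_right volume c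
        have hkey := hmp.setLIntegral_comp_preimage (measurableSet_unitCube d) hG
        rw [← hkey]
        apply MeasureTheory.lintegral_congr
        intro y
        have : y + c = fun i => y i + (((fun i => if b i then (1:ℤ) else 0) i : ℤ) : ℝ) := by
          funext i
          simp only [Pi.add_apply, hc]
          by_cases hb : b i <;> simp [hb]
        rw [this, hper (fun i => if b i then (1:ℤ) else 0) y]
    _ = 2^d * ∫⁻ x in unitCube d, G x ∂volume := by
        rw [tsum_fintype, Finset.sum_const, Finset.card_univ]
        have : Fintype.card (Fin d → Bool) = 2^d := by
          rw [Fintype.card_fun]; simp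
        rw [this]
        rw [nsmul_eq_mul]
        push_cast
        rfl

lemma mem_bigCube_sub {w c : Vec d} (hw : w ∈ unitCube d) (hc : c ∈ unitCube d) :
    w - c ∈ bigCube d := by
  intro i _
  have h1 := hw i
  have h2 := hc i
  obtain ⟨a1, a2⟩ := h1
  obtain ⟨b1, b2⟩ := h2
  constructor
  · simp only [Pi.sub_apply]; linarith
  · simp only [Pi.sub_apply]; linarith

lemma shift_lintegral_le (G : Vec d → ℝ≥0∞) (hG : Measurable G) (hper : Per G)
    {c : Vec d} (hc : c ∈ unitCube d) :
    (∫⁻ w in unitCube d, G (w - c) ∂volume) ≤ 2^d * ∫⁻ x in unitCube d, G x ∂volume := by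
  have hmp : MeasureTheory.MeasurePreserving (fun w : Vec d => w - c) volume volume := by
    simpa [sub_eq_add_neg] using
      MeasureTheory.measurePreserving_add_right (volume : Measure (Vec d)) (-c)
  have h1 : (∫⁻ w in (fun w : Vec d => w - c) ⁻¹' (bigCube d), G (w - c) ∂volume)
      = ∫⁻ x in bigCube d, G x ∂volume :=
    hmp.setLIntegral_comp_preimage measurableSet_bigCube hG
  have hsub : unitCube d ⊆ (fun w : Vec d => w - c) ⁻¹' (bigCube d) :=
    fun w hw => mem_bigCube_sub hw hc
  calc (∫⁻ w in unitCube d, G (w - c) ∂volume)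
      ≤ ∫⁻ w in (fun w : Vec d => w - c) ⁻¹' (bigCube d), G (w - c) ∂volume :=
        MeasureTheory.lintegral_mono_set hsub
    _ = ∫⁻ x in bigCube d, G x ∂volume := h1
    _ ≤ 2^d * ∫⁻ x in unitCube d, G x ∂volume := lintegral_bigCube_le G hG hper

lemma shift_lintegral_le' (G : Vec d → ℝ≥0∞) (hG : Measurable G) (hper : Per G)
    {c : Vec d} (hc : c ∈ unitCube d) :
    (∫⁻ w in unitCube d, G (c - w) ∂volume) ≤ 2^d * ∫⁻ x in unitCube d, G x ∂volume := by
  have hmp : MeasureTheory.MeasurePreserving (fun w : Vec d => c - w) volume volume :=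
    MeasureTheory.Measure.measurePreserving_sub_left volume c
  have h1 : (∫⁻ w in (fun w : Vec d => c - w) ⁻¹' (bigCube d), G (c - w) ∂volume)
      = ∫⁻ x in bigCube d, G x ∂volume :=
    hmp.setLIntegral_comp_preimage measurableSet_bigCube hG
  have hsub : unitCube d ⊆ (fun w : Vec d => c - w) ⁻¹' (bigCube d) :=
    fun w hw => mem_bigCube_sub hc hw
  calc (∫⁻ w in unitCube d, G (c - w) ∂volume)
      ≤ ∫⁻ w in (fun w : Vec d => c - w) ⁻¹' (bigCube d), G (c - w) ∂volume :=
        MeasureTheory.lintegral_mono_set hsub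
    _ = ∫⁻ x in bigCube d, G x ∂volume := h1
    _ ≤ 2^d * ∫⁻ x in unitCube d, G x ∂volume := lintegral_bigCube_le G hG hper

/-! ### Null sets of periodic functions -/

lemma null_of_periodic_null {N : Set (Vec d)} (hN : MeasurableSet N)
    (hper : ∀ (ε : Fin d → ℤ) (x : Vec d), ((fun i => x i + (ε i : ℝ)) ∈ N ↔ x ∈ N))
    (h0 : volume (N ∩ unitCube d) = 0) : volume N = 0 := by
  have hcov : N ⊆ ⋃ ε : Fin d → ℤ,
      ((fun x : Vec d => x + zc ε) ⁻¹' (N ∩ unitCube d)) := by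
    intro x hx
    refine Set.mem_iUnion.mpr ⟨fun i => -⌊x i⌋, Set.mem_preimage.mpr ⟨?_, ?_⟩⟩
    · exact (hper (fun i => -⌊x i⌋) x).mpr hx
    · intro i
      show x i + ((-⌊x i⌋ : ℤ) : ℝ) ∈ Set.Ico (0:ℝ) 1
      push_cast
      constructor
      · linarith [Int.floor_le (x i)]
      · linarith [Int.lt_floor_add_one (x i)]
  apply measure_mono_null hcov
  have hz : ∀ ε : Fin d → ℤ,
      volume ((fun x : Vec d => x + zc ε) ⁻¹' (N ∩ unitCube d)) = 0 := by
    intro ε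
    have hmp : MeasureTheory.MeasurePreserving (fun x : Vec d => x + zc ε) volume volume :=
      MeasureTheory.measurePreserving_add_right volume (zc ε)
    rw [hmp.measure_preimage (hN.inter (measurableSet_unitCube d)).nullMeasurableSet]
    exact h0
  have h1 := measure_iUnion_le
    (μ := (volume : Measure (Vec d)))
    (s := fun ε : Fin d → ℤ => ((fun x : Vec d => x + zc ε) ⁻¹' (N ∩ unitCube d)))
  refine le_antisymm (le_trans h1 (le_of_eq ?_)) zero_le
  rw [tsum_congr hz]
  simp

lemma ae_comp_sub {Q : Vec d → Prop} (hQ : MeasurableSet {z | Q z})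
    (hper : ∀ (ε : Fin d → ℤ) (x : Vec d), (Q (fun i => x i + (ε i : ℝ)) ↔ Q x))
    (h0 : ∀ᵐ z ∂(tmeas d), Q z) (x : Vec d) :
    ∀ᵐ y ∂(tmeas d), Q (x - y) := by
  set N := {z | ¬ Q z} with hNdef
  have hNmeas : MeasurableSet N := hQ.compl
  have h0' : volume (N ∩ unitCube d) = 0 := by
    rw [MeasureTheory.ae_iff] at h0
    rwa [Measure.restrict_apply hNmeas] at h0
  have hNnull : volume N = 0 :=
    null_of_periodic_null hNmeas (by intro ε y; simp only [hNdef, Set.mem_setOf_eq, hper]) h0'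
  have hpre : volume ((fun y : Vec d => x - y) ⁻¹' N) = 0 := by
    have hmp : MeasureTheory.MeasurePreserving (fun y : Vec d => x - y) volume volume :=
      MeasureTheory.Measure.measurePreserving_sub_left volume x
    rw [hmp.measure_preimage hNmeas.nullMeasurableSet]
    exact hNnull
  apply MeasureTheory.ae_restrict_of_ae
  rw [MeasureTheory.ae_iff]
  exact hpre

/-! ### Young's inequality on the torus -/

lemma tmeas_ne_zero : (tmeas d) ≠ 0 := by
  intro h0
  have h1 : (tmeas d) Set.univ = 1 := measure_univ
  rw [h0] at h1
  simp at h1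

lemma one_le_two_pow_e (d : ℕ) : (1:ℝ≥0∞) ≤ 2^d := by
  calc (1:ℝ≥0∞) = 1^d := (one_pow d).symm
  _ ≤ 2^d := pow_le_pow_left₀ zero_le_one one_le_two d

lemma two_pow_rpow_le (d : ℕ) {s : ℝ} (hs0 : 0 ≤ s) (hs1 : s ≤ 1) (X : ℝ≥0∞) :
    ((2:ℝ≥0∞)^d * X)^s ≤ 2^d * X^s := by
  rw [ENNReal.mul_rpow_of_nonneg _ _ hs0]
  apply mul_le_mul_left
  calc ((2:ℝ≥0∞)^d)^s ≤ ((2:ℝ≥0∞)^d)^(1:ℝ) :=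
        ENNReal.rpow_le_rpow_of_exponent_le (one_le_two_pow_e d) hs1
  _ = 2^d := ENNReal.rpow_one _

lemma eLpNorm_top_le_of_cube_bound {w : Vec d → ℂ} {C : ℝ≥0∞}
    (h : ∀ x ∈ unitCube d, (‖w x‖₊ : ℝ≥0∞) ≤ C) :
    eLpNorm w ⊤ (tmeas d) ≤ C := by
  rw [MeasureTheory.eLpNorm_exponent_top]
  have hae : (fun x => (‖w x‖₊ : ℝ≥0∞)) ≤ᵐ[tmeas d] fun _ => C := by
    filter_upwards [MeasureTheory.ae_restrict_mem (measurableSet_unitCube d)] with x hx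
    exact h x hx
  calc MeasureTheory.eLpNormEssSup w (tmeas d)
      ≤ essSup (fun _ => C) (tmeas d) := essSup_mono_ae hae
  _ = C := essSup_const _ tmeas_ne_zero

lemma nnnorm_integral_conv_le (u v : Vec d → ℂ) (x : Vec d) :
    (‖∫ y in unitCube d, u y * v (x - y)‖₊ : ℝ≥0∞)
      ≤ ∫⁻ y in unitCube d, (‖u y‖₊ : ℝ≥0∞) * (‖v (x - y)‖₊ : ℝ≥0∞) := by
  refine le_trans (MeasureTheory.enorm_integral_le_lintegral_enorm _) (le_of_eq ?_)
  apply MeasureTheory.lintegral_congr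
  intro y
  rw [enorm_mul]; rfl

lemma young {p q r : ℝ≥0∞} (hp : 1 ≤ p) (hq : 1 ≤ q) (hr : 1 ≤ r)
    (hpqr : p⁻¹ + q⁻¹ = r⁻¹ + 1)
    {u v : Vec d → ℂ} (hu : Continuous u) (hv : Continuous v) (hvper : Per v) :
    eLpNorm (fun x => ∫ y in unitCube d, u y * v (x - y)) r (tmeas d)
      ≤ 2^(2*d) * (torusLp p u * torusLp q v) := by
  have hp0 : p ≠ 0 := by intro h; rw [h] at hp; exact absurd hp (by simp)
  have hq0 : q ≠ 0 := by intro h; rw [h] at hq; exact absurd hq (by simp)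
  have hr0 : r ≠ 0 := by intro h; rw [h] at hr; exact absurd hr (by simp)
  -- the nonnegative envelopes
  set F : Vec d → ℝ≥0∞ := fun y => (‖u y‖₊ : ℝ≥0∞) with hFdef
  set G : Vec d → ℝ≥0∞ := fun y => (‖v y‖₊ : ℝ≥0∞) with hGdef
  have hF : Measurable F := hu.measurable.nnnorm.coe_nnreal_ennreal
  have hG : Measurable G := hv.measurable.nnnorm.coe_nnreal_ennreal
  have hGper : Per G := by
    intro ε x
    simp only [hGdef]
    rw [hvper ε x]
  -- zero cases
  by_cases hu0 : torusLp p u = 0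
  · have huae : u =ᵐ[tmeas d] 0 :=
      (MeasureTheory.eLpNorm_eq_zero_iff hu.aestronglyMeasurable hp0).mp hu0
    have hw0 : ∀ x, (∫ y in unitCube d, u y * v (x - y)) = 0 := by
      intro x
      rw [show (0:ℂ) = ∫ _y in unitCube d, (0:ℂ) from (by simp)]
      apply MeasureTheory.integral_congr_ae
      filter_upwards [huae] with y hy
      rw [hy]
      simp
    rw [show (fun x => ∫ y in unitCube d, u y * v (x - y)) = (fun _ => (0:ℂ)) from
      funext hw0]
    rw [MeasureTheory.eLpNorm_zero']
    exact zero_le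
  by_cases hv0 : torusLp q v = 0
  · have hvae : v =ᵐ[tmeas d] 0 :=
      (MeasureTheory.eLpNorm_eq_zero_iff hv.aestronglyMeasurable hq0).mp hv0
    have hvshift : ∀ x, ∀ᵐ y ∂(tmeas d), v (x - y) = 0 := by
      intro x
      apply ae_comp_sub (Q := fun z => v z = 0)
      · exact hv.measurable (measurableSet_singleton 0)
      · intro ε z
        rw [hvper ε z]
      · filter_upwards [hvae] with z hz using hz
    have hw0 : ∀ x, (∫ y in unitCube d, u y * v (x - y)) = 0 := by
      intro x
      rw [show (0:ℂ) = ∫ _y in unitCube d, (0:ℂ) from (by simp)]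
      apply MeasureTheory.integral_congr_ae
      filter_upwards [hvshift x] with y hy
      rw [hy]
      simp
    rw [show (fun x => ∫ y in unitCube d, u y * v (x - y)) = (fun _ => (0:ℂ)) from
      funext hw0]
    rw [MeasureTheory.eLpNorm_zero']
    exact zero_le
  by_cases hut : torusLp p u = ⊤
  · rw [hut, ENNReal.top_mul hv0, ENNReal.mul_top (by positivity)]
    exact le_top
  by_cases hvt : torusLp q v = ⊤
  · rw [hvt, ENNReal.mul_top hu0, ENNReal.mul_top (by positivity)]
    exact le_top
  -- pointwise domination
  have hdom : ∀ x, (‖∫ y in unitCube d, u y * v (x - y)‖₊ : ℝ≥0∞)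
      ≤ ∫⁻ y in unitCube d, F y * G (x - y) := nnnorm_integral_conv_le u v
  rcases eq_or_ne r ⊤ with hrtop | hrfin
  -- CASE r = ⊤
  · subst hrtop
    have hpq1 : p⁻¹ + q⁻¹ = 1 := by simpa using hpqr
    have hmain : ∀ x ∈ unitCube d,
        (∫⁻ y in unitCube d, F y * G (x - y)) ≤ 2^d * (torusLp p u * torusLp q v) := by
      intro x hx
      rcases eq_or_ne q ⊤ with hqtop | hqfin
      · -- q = ⊤, p = 1
        have hp1 : p = 1 := by
          rw [hqtop] at hpq1
          simp only [ENNReal.inv_top, add_zero] at hpq1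
          exact ENNReal.inv_eq_one.mp hpq1
        set M := essSup G (tmeas d) with hM
        have hMv : M = torusLp q v := by
          rw [hqtop, torusLp, MeasureTheory.eLpNorm_exponent_top]
          rfl
        have hGae : ∀ᵐ z ∂(tmeas d), G z ≤ M := ENNReal.ae_le_essSup G
        have hshift : ∀ᵐ y ∂(tmeas d), G (x - y) ≤ M := by
          apply ae_comp_sub (Q := fun z => G z ≤ M)
          · exact measurableSet_le hG measurable_const
          · intro ε z
            rw [hGper ε z]
          · exact hGae
        calc (∫⁻ y in unitCube d, F y * G (x - y))
            ≤ ∫⁻ y in unitCube d, F y * M := by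
              apply MeasureTheory.lintegral_mono_ae
              filter_upwards [hshift] with y hy
              exact mul_le_mul_right hy _
        _ = (∫⁻ y in unitCube d, F y) * M := MeasureTheory.lintegral_mul_const M hF
        _ = torusLp p u * torusLp q v := by
            rw [hp1, torusLp, MeasureTheory.eLpNorm_one_eq_lintegral_enorm, hMv]; rfl
        _ ≤ 2^d * (torusLp p u * torusLp q v) :=
            le_mul_of_one_le_left zero_le (one_le_two_pow_e d)
      · rcases eq_or_ne p ⊤ with hptop | hpfin
        · -- p = ⊤, q = 1
          have hq1 : q = 1 := by
            rw [hptop] at hpq1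
            simp only [ENNReal.inv_top, zero_add] at hpq1
            exact ENNReal.inv_eq_one.mp hpq1
          set M := essSup F (tmeas d) with hM
          have hMu : M = torusLp p u := by
            rw [hptop, torusLp, MeasureTheory.eLpNorm_exponent_top]
            rfl
          have hFae : ∀ᵐ y ∂(tmeas d), F y ≤ M := ENNReal.ae_le_essSup F
          have hGmx : Measurable fun y => G (x - y) :=
            hG.comp (measurable_const.sub measurable_id)
          calc (∫⁻ y in unitCube d, F y * G (x - y))
              ≤ ∫⁻ y in unitCube d, M * G (x - y) := by
                apply MeasureTheory.lintegral_mono_ae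
                filter_upwards [hFae] with y hy
                exact mul_le_mul_left hy _
          _ = M * ∫⁻ y in unitCube d, G (x - y) :=
              MeasureTheory.lintegral_const_mul M hGmx
          _ ≤ M * (2^d * ∫⁻ z in unitCube d, G z) :=
              mul_le_mul_right (shift_lintegral_le' G hG hGper hx) M
          _ = 2^d * (torusLp p u * torusLp q v) := by
              have hG1 : torusLp 1 v = ∫⁻ z in unitCube d, G z :=
                MeasureTheory.eLpNorm_one_eq_lintegral_enorm
              rw [hq1, hG1, ← hMu]
              ring
        · -- p, q finite conjugate exponents
          have hpne1 : p ≠ 1 := by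
            intro h1
            rw [h1] at hpq1
            simp only [inv_one] at hpq1
            have h2 : (1:ℝ≥0∞) + q⁻¹ = 1 + 0 := by
              rw [add_zero]; exact hpq1
            have h3 : q⁻¹ = 0 := (ENNReal.add_right_inj (by simp)).mp h2
            exact hqfin (ENNReal.inv_eq_zero.mp h3)
          have hpreal : 1 < p.toReal := by
            rw [← ENNReal.toReal_one]
            exact ENNReal.toReal_strict_mono hpfin (lt_of_le_of_ne hp (Ne.symm hpne1))
          have hinv_sum : p.toReal⁻¹ + q.toReal⁻¹ = 1 := by
            have h1 : (p⁻¹ + q⁻¹).toReal = (1:ℝ≥0∞).toReal := by rw [hpq1]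
            rw [ENNReal.toReal_add (by simpa using hp0) (by simpa using hq0)] at h1
            rw [ENNReal.toReal_inv, ENNReal.toReal_inv] at h1
            simpa using h1
          have hconj : Real.HolderConjugate p.toReal q.toReal := Real.holderConjugate_iff.mpr ⟨hpreal, hinv_sum⟩
          have hGmx : Measurable fun y => G (x - y) :=
            hG.comp (measurable_const.sub measurable_id)
          have hq1le : 1 ≤ q.toReal := by
            rw [← ENNReal.toReal_one]
            exact ENNReal.toReal_mono hqfin hq
          calc (∫⁻ y in unitCube d, F y * G (x - y))
              ≤ (∫⁻ y in unitCube d, F y ^ p.toReal) ^ (1 / p.toReal)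
                * (∫⁻ y in unitCube d, G (x - y) ^ q.toReal) ^ (1 / q.toReal) :=
                ENNReal.lintegral_mul_le_Lp_mul_Lq _ hconj hF.aemeasurable hGmx.aemeasurable
          _ ≤ (∫⁻ y in unitCube d, F y ^ p.toReal) ^ (1 / p.toReal)
                * ((2^d * ∫⁻ z in unitCube d, G z ^ q.toReal)) ^ (1 / q.toReal) := by
              apply mul_le_mul_right
              apply ENNReal.rpow_le_rpow _ (by positivity)
              exact shift_lintegral_le' (fun z => G z ^ q.toReal)
                (hG.pow_const _) (fun ε z => by simp only; rw [hGper ε z]) hx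
          _ ≤ (∫⁻ y in unitCube d, F y ^ p.toReal) ^ (1 / p.toReal)
                * (2^d * (∫⁻ z in unitCube d, G z ^ q.toReal) ^ (1 / q.toReal)) := by
              apply mul_le_mul_right
              exact two_pow_rpow_le d (by positivity)
                (by rw [div_le_one (by linarith)]; linarith) _
          _ = 2^d * (torusLp p u * torusLp q v) := by
              rw [torusLp, torusLp,
                MeasureTheory.eLpNorm_eq_lintegral_rpow_enorm hp0 hpfin,
                MeasureTheory.eLpNorm_eq_lintegral_rpow_enorm hq0 hqfin]
              ring
              rfl
    calc eLpNorm (fun x => ∫ y in unitCube d, u y * v (x - y)) ⊤ (tmeas d)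
        ≤ 2^d * (torusLp p u * torusLp q v) := by
          apply eLpNorm_top_le_of_cube_bound
          intro x hx
          exact le_trans (hdom x) (hmain x hx)
    _ ≤ 2^(2*d) * (torusLp p u * torusLp q v) := by
        apply mul_le_mul_left
        exact pow_le_pow_right₀ one_le_two (by omega)
  -- CASE r finite
  · have hqfin : q ≠ ⊤ := by
      intro hqtop
      rw [hqtop] at hpqr
      simp only [ENNReal.inv_top, add_zero] at hpqr
      have h1 : p⁻¹ ≤ 1 := ENNReal.inv_le_one.mpr hp
      rw [hpqr] at h1
      have h2 : r⁻¹ + 1 ≤ 0 + 1 := by simpa using h1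
      have h3 : r⁻¹ ≤ 0 := ENNReal.add_le_add_iff_right (by simp) |>.mp h2
      exact hrfin (ENNReal.inv_eq_zero.mp (le_antisymm h3 zero_le))
    have hpfin : p ≠ ⊤ := by
      intro hptop
      rw [hptop] at hpqr
      simp only [ENNReal.inv_top, zero_add] at hpqr
      have h1 : q⁻¹ ≤ 1 := ENNReal.inv_le_one.mpr hq
      rw [hpqr] at h1
      have h2 : r⁻¹ + 1 ≤ 0 + 1 := by simpa using h1
      have h3 : r⁻¹ ≤ 0 := ENNReal.add_le_add_iff_right (by simp) |>.mp h2
      exact hrfin (ENNReal.inv_eq_zero.mp (le_antisymm h3 zero_le))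
    set p' := p.toReal with hp'def
    set q' := q.toReal with hq'def
    set r' := r.toReal with hr'def
    have hp'1 : 1 ≤ p' := by
      rw [hp'def, ← ENNReal.toReal_one]; exact ENNReal.toReal_mono hpfin hp
    have hq'1 : 1 ≤ q' := by
      rw [hq'def, ← ENNReal.toReal_one]; exact ENNReal.toReal_mono hqfin hq
    have hr'1 : 1 ≤ r' := by
      rw [hr'def, ← ENNReal.toReal_one]; exact ENNReal.toReal_mono hrfin hr
    have hp'0 : p' ≠ 0 := by linarith
    have hq'0 : q' ≠ 0 := by linarith
    have hr'0 : r' ≠ 0 := by linarith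
    have harith : 1/p' + 1/q' = 1 + 1/r' := by
      have h1 : (p⁻¹ + q⁻¹).toReal = (r⁻¹ + 1).toReal := by rw [hpqr]
      rw [ENNReal.toReal_add (by simpa using hp0) (by simpa using hq0),
        ENNReal.toReal_add (by simpa using hr0) (by simp),
        ENNReal.toReal_inv, ENNReal.toReal_inv, ENNReal.toReal_inv] at h1
      simp only [ENNReal.toReal_one] at h1
      rw [one_div, one_div, one_div]
      linarith
    set w2 : ℝ := 1 - 1/q' with hw2def
    set w3 : ℝ := 1 - 1/p' with hw3def
    have hw1 : (0:ℝ) ≤ 1/r' := by positivity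
    have hw2 : 0 ≤ w2 := by
      rw [hw2def, sub_nonneg, div_le_one (by linarith)]; linarith
    have hw3 : 0 ≤ w3 := by
      rw [hw3def, sub_nonneg, div_le_one (by linarith)]; linarith
    have hsumw : 1/r' + w2 + w3 = 1 := by
      rw [hw2def, hw3def]; linarith
    have hA : 1/r' + w2 = 1/p' := by rw [hw2def]; linarith
    have hB : 1/r' + w3 = 1/q' := by rw [hw3def]; linarith
    -- the decomposition
    have hdecomp : ∀ a b : ℝ≥0∞,
        a * b = (a^p' * b^q')^(1/r') * ((a^p')^w2 * (b^q')^w3) := by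
      intro a b
      rw [ENNReal.mul_rpow_of_nonneg _ _ hw1]
      rw [show (a^p')^(1/r') * (b^q')^(1/r') * ((a^p')^w2 * (b^q')^w3)
          = ((a^p')^(1/r') * (a^p')^w2) * ((b^q')^(1/r') * (b^q')^w3) by ring]
      rw [← ENNReal.rpow_add_of_nonneg _ _ hw1 hw2,
        ← ENNReal.rpow_add_of_nonneg _ _ hw1 hw3, hA, hB,
        ← ENNReal.rpow_mul, ← ENNReal.rpow_mul,
        mul_one_div, div_self hp'0, mul_one_div, div_self hq'0,
        ENNReal.rpow_one, ENNReal.rpow_one]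
    -- integral quantities
    set IF := ∫⁻ y in unitCube d, F y ^ p' with hIFdef
    set IG := ∫⁻ y in unitCube d, G y ^ q' with hIGdef
    have hIFu : torusLp p u = IF ^ (1/p') :=
      MeasureTheory.eLpNorm_eq_lintegral_rpow_enorm hp0 hpfin
    have hIGv : torusLp q v = IG ^ (1/q') :=
      MeasureTheory.eLpNorm_eq_lintegral_rpow_enorm hq0 hqfin
    have hIF_ne_top : IF ≠ ⊤ := by
      intro htop
      apply hut
      rw [hIFu, htop]
      rw [ENNReal.top_rpow_of_pos (by positivity)]
    have hIG_ne_top : IG ≠ ⊤ := by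
      intro htop
      apply hvt
      rw [hIGv, htop]
      rw [ENNReal.top_rpow_of_pos (by positivity)]
    -- Hölder with three exponents, for each x in the cube
    set Φ : Vec d → ℝ≥0∞ := fun x => ∫⁻ y in unitCube d, F y ^ p' * G (x - y) ^ q'
      with hPhidef
    have htriple : ∀ x ∈ unitCube d,
        (∫⁻ y in unitCube d, F y * G (x - y))
          ≤ (Φ x) ^ (1/r') * (IF ^ w2 * (2^d * IG) ^ w3) := by
      intro x hx
      have hGmx : Measurable fun y => G (x - y) :=
        hG.comp (measurable_const.sub measurable_id)
      have hhold := ENNReal.lintegral_prod_norm_pow_le (μ := tmeas d)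
        (Finset.univ : Finset (Fin 3))
        (f := ![fun y => F y ^ p' * G (x - y) ^ q',
                fun y => F y ^ p', fun y => G (x - y) ^ q'])
        (p := ![1/r', w2, w3]) ?_ ?_ ?_
      · have hlhs : (∫⁻ y in unitCube d, F y * G (x - y))
            = ∫⁻ y in unitCube d, ∏ i : Fin 3,
                (![fun y => F y ^ p' * G (x - y) ^ q',
                   fun y => F y ^ p', fun y => G (x - y) ^ q'] i y)
                ^ (![1/r', w2, w3] i) := by
          apply MeasureTheory.lintegral_congr
          intro y
          rw [Fin.prod_univ_three]
          simp only [Matrix.cons_val_zero, Matrix.cons_val_one, Matrix.head_cons,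
            Matrix.cons_val_two, Matrix.tail_cons]
          rw [hdecomp (F y) (G (x - y))]
          ring
        rw [hlhs]
        refine le_trans hhold ?_
        rw [Fin.prod_univ_three]
        simp only [Matrix.cons_val_zero, Matrix.cons_val_one, Matrix.head_cons,
          Matrix.cons_val_two, Matrix.tail_cons]
        have hBx : (∫⁻ y in unitCube d, G (x - y) ^ q') ≤ 2^d * IG :=
          shift_lintegral_le' (fun z => G z ^ q') (hG.pow_const _)
            (fun ε z => by simp only; rw [hGper ε z]) hx
        calc (∫⁻ y in unitCube d, F y ^ p' * G (x - y) ^ q') ^ (1/r')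
              * (∫⁻ y in unitCube d, F y ^ p') ^ w2
              * (∫⁻ y in unitCube d, G (x - y) ^ q') ^ w3
            ≤ (Φ x) ^ (1/r') * IF ^ w2 * (2^d * IG) ^ w3 := by
              apply mul_le_mul'
              · exact le_refl _
              · exact ENNReal.rpow_le_rpow hBx hw3
        _ = (Φ x) ^ (1/r') * (IF ^ w2 * (2^d * IG) ^ w3) := by ring
      · intro i _
        fin_cases i
        · exact ((hF.pow_const _).mul (hGmx.pow_const _)).aemeasurable
        · exact (hF.pow_const _).aemeasurable
        · exact (hGmx.pow_const _).aemeasurable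
      · rw [Fin.sum_univ_three]
        simp only [Matrix.cons_val_zero, Matrix.cons_val_one, Matrix.head_cons,
          Matrix.cons_val_two, Matrix.tail_cons]
        exact hsumw
      · intro i _
        fin_cases i
        · exact hw1
        · exact hw2
        · exact hw3
    -- Tonelli bound for the integral of Φ
    have hPhiInt : (∫⁻ x in unitCube d, Φ x) ≤ IF * (2^d * IG) := by
      have hswap : (∫⁻ x in unitCube d, Φ x)
          = ∫⁻ y in unitCube d, ∫⁻ x in unitCube d, F y ^ p' * G (x - y) ^ q' := by
        rw [hPhidef]
        apply MeasureTheory.lintegral_lintegral_swap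
        apply Measurable.aemeasurable
        exact ((hF.pow_const _).comp measurable_snd).mul
          ((hG.pow_const _).comp (measurable_fst.sub measurable_snd))
      rw [hswap]
      calc (∫⁻ y in unitCube d, ∫⁻ x in unitCube d, F y ^ p' * G (x - y) ^ q')
          = ∫⁻ y in unitCube d, F y ^ p' * ∫⁻ x in unitCube d, G (x - y) ^ q' := by
            apply MeasureTheory.lintegral_congr
            intro y
            exact MeasureTheory.lintegral_const_mul (F y ^ p')
              ((hG.pow_const _).comp (measurable_id.sub measurable_const))
      _ ≤ ∫⁻ y in unitCube d, F y ^ p' * (2^d * IG) := by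
          apply MeasureTheory.lintegral_mono_ae
          filter_upwards [MeasureTheory.ae_restrict_mem (measurableSet_unitCube d)]
            with y hy
          apply mul_le_mul_right
          exact shift_lintegral_le (fun z => G z ^ q') (hG.pow_const _)
            (fun ε z => by simp only; rw [hGper ε z]) hy
      _ = IF * (2^d * IG) := MeasureTheory.lintegral_mul_const _ (hF.pow_const _)
    -- putting everything together
    have hwnorm : eLpNorm (fun x => ∫ y in unitCube d, u y * v (x - y)) r (tmeas d)
        = (∫⁻ x in unitCube d,
            (‖∫ y in unitCube d, u y * v (x - y)‖₊ : ℝ≥0∞) ^ r') ^ (1/r') :=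
      MeasureTheory.eLpNorm_eq_lintegral_rpow_enorm hr0 hrfin
    rw [hwnorm]
    have hstep : (∫⁻ x in unitCube d,
        (‖∫ y in unitCube d, u y * v (x - y)‖₊ : ℝ≥0∞) ^ r')
        ≤ IF ^ (1 + w2 * r') * (2^d * IG) ^ (1 + w3 * r') := by
      calc (∫⁻ x in unitCube d,
          (‖∫ y in unitCube d, u y * v (x - y)‖₊ : ℝ≥0∞) ^ r')
          ≤ ∫⁻ x in unitCube d, Φ x * (IF ^ (w2 * r') * (2^d * IG) ^ (w3 * r')) := by
            apply MeasureTheory.lintegral_mono_ae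
            filter_upwards [MeasureTheory.ae_restrict_mem (measurableSet_unitCube d)]
              with x hx
            calc (‖∫ y in unitCube d, u y * v (x - y)‖₊ : ℝ≥0∞) ^ r'
                ≤ ((Φ x) ^ (1/r') * (IF ^ w2 * (2^d * IG) ^ w3)) ^ r' :=
                  ENNReal.rpow_le_rpow (le_trans (hdom x) (htriple x hx))
                    (by positivity)
            _ = Φ x * (IF ^ (w2 * r') * (2^d * IG) ^ (w3 * r')) := by
                rw [ENNReal.mul_rpow_of_nonneg _ _ (by positivity : (0:ℝ) ≤ r'),
                  ENNReal.mul_rpow_of_nonneg _ _ (by positivity : (0:ℝ) ≤ r'),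
                  ← ENNReal.rpow_mul, ← ENNReal.rpow_mul, ← ENNReal.rpow_mul,
                  one_div, inv_mul_cancel₀ hr'0, ENNReal.rpow_one]
      _ = (∫⁻ x in unitCube d, Φ x) * (IF ^ (w2 * r') * (2^d * IG) ^ (w3 * r')) := by
          apply MeasureTheory.lintegral_mul_const'
          apply ENNReal.mul_ne_top
          · exact ENNReal.rpow_ne_top_of_nonneg (by positivity) hIF_ne_top
          · apply ENNReal.rpow_ne_top_of_nonneg (by positivity)
            apply ENNReal.mul_ne_top (by simp) hIG_ne_top
      _ ≤ (IF * (2^d * IG)) * (IF ^ (w2 * r') * (2^d * IG) ^ (w3 * r')) :=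
          mul_le_mul_left hPhiInt _
      _ = (IF * IF ^ (w2 * r')) * ((2^d * IG) * (2^d * IG) ^ (w3 * r')) := by ring
      _ = IF ^ (1 + w2 * r') * (2^d * IG) ^ (1 + w3 * r') := by
          rw [ENNReal.rpow_add_of_nonneg _ _ zero_le_one (by positivity),
            ENNReal.rpow_add_of_nonneg _ _ zero_le_one (by positivity),
            ENNReal.rpow_one, ENNReal.rpow_one]
    calc (∫⁻ x in unitCube d,
        (‖∫ y in unitCube d, u y * v (x - y)‖₊ : ℝ≥0∞) ^ r') ^ (1/r')
        ≤ (IF ^ (1 + w2 * r') * (2^d * IG) ^ (1 + w3 * r')) ^ (1/r') :=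
          ENNReal.rpow_le_rpow hstep (by positivity)
    _ = IF ^ ((1 + w2 * r') * (1/r')) * (2^d * IG) ^ ((1 + w3 * r') * (1/r')) := by
        rw [ENNReal.mul_rpow_of_nonneg _ _ hw1, ← ENNReal.rpow_mul, ← ENNReal.rpow_mul]
    _ = IF ^ (1/p') * (2^d * IG) ^ (1/q') := by
        have hmulid : ∀ w : ℝ, (1 + w * r') * (1/r') = 1/r' + w := by
          intro w
          field_simp
        rw [hmulid w2, hmulid w3, hA, hB]
    _ ≤ IF ^ (1/p') * (2^d * IG ^ (1/q')) := by
        apply mul_le_mul_right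
        exact two_pow_rpow_le d (by positivity)
          (by rw [div_le_one (by linarith)]; linarith) IG
    _ = 2^d * (torusLp p u * torusLp q v) := by
        rw [hIFu, hIGv]; ring
    _ ≤ 2^(2*d) * (torusLp p u * torusLp q v) := by
        apply mul_le_mul_left
        exact pow_le_pow_right₀ one_le_two (by omega)

/-! ### Final helpers -/

lemma block_continuous (P : DyadicPartition d) (j : ℕ) (f : Vec d → ℂ) :
    Continuous (block P j f) := by
  rw [block_eq_trig]
  exact continuous_trig _ _

lemma block_per (P : DyadicPartition d) (j : ℕ) (f : Vec d → ℂ) :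
    Per (block P j f) := by
  intro ε x
  rw [block_eq_trig]
  exact trig_periodic _ _ ε x

lemma ofReal_two_rpow (x : ℝ) : ENNReal.ofReal ((2:ℝ) ^ x) = (2:ℝ≥0∞) ^ x := by
  rw [← ENNReal.ofReal_rpow_of_pos two_pos]
  norm_num

end BesovAux

/-- Young-type convolution estimate on Besov spaces:
for `1/r = 1/p + 1/q - 1`, `‖φ * ψ‖_{B^{α+β}_{r,∞}} ≲ ‖φ‖_{B^α_{p,∞}} ‖ψ‖_{B^β_{q,∞}}`. -/
theorem besov_convolution_estimate (d : ℕ) (P : DyadicPartition d) (α β : ℝ)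
    (p q r : ℝ≥0∞) (hp : 1 ≤ p) (hq : 1 ≤ q) (hr : 1 ≤ r)
    (hpqr : p⁻¹ + q⁻¹ = r⁻¹ + 1) :
    ∃ C : ℝ≥0, ∀ f g : Vec d → ℂ,
      besov P (α + β) r (torusConv f g) ≤ C * besov P α p f * besov P β q g := by
  classical
  open BesovAux in
  obtain ⟨L, hL⟩ : ∃ L : ℕ, P.c2 < P.c1 * 2^L := by
    obtain ⟨L, hL⟩ := pow_unbounded_of_one_lt (R := ℝ) (P.c2 / P.c1) one_lt_two
    exact ⟨L, by rw [mul_comm]; exact (div_lt_iff₀ P.hc1).mp hL⟩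
  set K : ℝ≥0∞ := 2^(2*d) * ((2*L+1 : ℕ) : ℝ≥0∞) * (2:ℝ≥0∞) ^ (|β| * (L:ℝ)) with hK
  have hKne : K ≠ ⊤ := by
    rw [hK]
    apply ENNReal.mul_ne_top
    · apply ENNReal.mul_ne_top
      · exact ENNReal.pow_ne_top (by simp)
      · exact ENNReal.natCast_ne_top _
    · exact ENNReal.rpow_ne_top_of_nonneg (by positivity) (by simp)
  refine ⟨K.toNNReal, ?_⟩
  intro f g
  have hKK : (K.toNNReal : ℝ≥0∞) = K := ENNReal.coe_toNNReal hKne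
  rw [hKK]
  set A := besov P α p f with hA
  set B := besov P β q g with hB
  by_cases hsum : Summable fun k => ‖tcoeff f k * tcoeff g k‖
  swap
  · rw [torusConv_of_not_summable hsum, besov]
    refine le_trans (iSup_le fun j => le_of_eq ?_) zero_le
    rw [block_zero_fun P j, torusLp, MeasureTheory.eLpNorm_zero', mul_zero]
  · rw [besov]
    refine iSup_le fun j => ?_
    set J := Finset.Icc (j - L) (j + L) with hJ
    have hvc : Continuous (Sblock P L j g) :=
      continuous_finset_sum _ (fun i _ => block_continuous P i g)
    have hvp : Per (Sblock P L j g) := by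
      intro ε x
      exact Finset.sum_congr rfl fun i _ => block_per P i g ε x
    have h1 : torusLp r (block P j (torusConv f g))
        ≤ 2^(2*d) * (torusLp p (block P j f) * torusLp q (Sblock P L j g)) := by
      rw [torusLp, block_conv_key P L hL hsum j]
      exact young hp hq hr hpqr (block_continuous P j f) hvc hvp
    have h2 : torusLp q (Sblock P L j g) ≤ ∑ i ∈ J, torusLp q (block P i g) := by
      have hveq : Sblock P L j g = ∑ i ∈ J, block P i g := by
        funext x
        rw [Finset.sum_apply]
        rfl
      rw [torusLp, hveq]
      exact MeasureTheory.eLpNorm_sum_le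
        (fun i _ => (block_continuous P i g).aestronglyMeasurable) hq
    have hAj : (2:ℝ≥0∞) ^ (α * ((j:ℝ)-1)) * torusLp p (block P j f) ≤ A := by
      rw [hA, besov, ← ofReal_two_rpow]
      exact le_iSup (fun j' : ℕ => ENNReal.ofReal ((2:ℝ) ^ (α * ((j':ℝ)-1)))
        * torusLp p (block P j' f)) j
    have hBi : ∀ i ∈ J, (2:ℝ≥0∞) ^ (β * ((j:ℝ)-1)) * torusLp q (block P i g)
        ≤ (2:ℝ≥0∞) ^ (|β| * (L:ℝ)) * B := by
      intro i hi
      rw [Finset.mem_Icc] at hi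
      have hle1 : j ≤ i + L := by omega
      have hle2 : i ≤ j + L := hi.2
      have hiJ : |(j:ℝ) - (i:ℝ)| ≤ (L:ℝ) := by
        have c1 : (j:ℝ) ≤ (i:ℝ) + (L:ℝ) := by exact_mod_cast hle1
        have c2 : (i:ℝ) ≤ (j:ℝ) + (L:ℝ) := by exact_mod_cast hle2
        rw [abs_le]
        constructor <;> linarith
      have hsplit : (2:ℝ≥0∞) ^ (β * ((j:ℝ)-1))
          = (2:ℝ≥0∞) ^ (β * ((j:ℝ)-(i:ℝ))) * (2:ℝ≥0∞) ^ (β * ((i:ℝ)-1)) := by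
        rw [← ENNReal.rpow_add _ _ (by norm_num) (by norm_num)]
        congr 1
        ring
      rw [hsplit, mul_assoc]
      apply mul_le_mul'
      · apply ENNReal.rpow_le_rpow_of_exponent_le one_le_two
        calc β * ((j:ℝ)-(i:ℝ)) ≤ |β * ((j:ℝ)-(i:ℝ))| := le_abs_self _
        _ = |β| * |(j:ℝ)-(i:ℝ)| := abs_mul _ _
        _ ≤ |β| * (L:ℝ) := mul_le_mul_of_nonneg_left hiJ (abs_nonneg β)
      · rw [hB, besov, ← ofReal_two_rpow]
        exact le_iSup (fun i' : ℕ => ENNReal.ofReal ((2:ℝ) ^ (β * ((i':ℝ)-1)))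
          * torusLp q (block P i' g)) i
    have hSg : (2:ℝ≥0∞) ^ (β * ((j:ℝ)-1)) * (∑ i ∈ J, torusLp q (block P i g))
        ≤ ((2*L+1 : ℕ) : ℝ≥0∞) * ((2:ℝ≥0∞) ^ (|β| * (L:ℝ)) * B) := by
      rw [Finset.mul_sum]
      calc (∑ i ∈ J, (2:ℝ≥0∞) ^ (β * ((j:ℝ)-1)) * torusLp q (block P i g))
          ≤ ∑ _i ∈ J, (2:ℝ≥0∞) ^ (|β| * (L:ℝ)) * B := Finset.sum_le_sum hBi
      _ = (J.card : ℝ≥0∞) * ((2:ℝ≥0∞) ^ (|β| * (L:ℝ)) * B) := by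
          rw [Finset.sum_const, nsmul_eq_mul]
      _ ≤ ((2*L+1 : ℕ) : ℝ≥0∞) * ((2:ℝ≥0∞) ^ (|β| * (L:ℝ)) * B) := by
          apply mul_le_mul_left
          have hcard : J.card ≤ 2*L+1 := by
            rw [hJ, Nat.card_Icc]
            omega
          exact_mod_cast hcard
    have hsplit2 : (2:ℝ≥0∞) ^ ((α+β) * ((j:ℝ)-1))
        = (2:ℝ≥0∞) ^ (α * ((j:ℝ)-1)) * (2:ℝ≥0∞) ^ (β * ((j:ℝ)-1)) := by
      rw [← ENNReal.rpow_add _ _ (by norm_num) (by norm_num)]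
      congr 1
      ring
    rw [ofReal_two_rpow]
    calc (2:ℝ≥0∞) ^ ((α+β) * ((j:ℝ)-1)) * torusLp r (block P j (torusConv f g))
        ≤ (2:ℝ≥0∞) ^ ((α+β) * ((j:ℝ)-1))
            * (2^(2*d) * (torusLp p (block P j f) * torusLp q (Sblock P L j g))) :=
          mul_le_mul_right h1 _
    _ ≤ (2:ℝ≥0∞) ^ ((α+β) * ((j:ℝ)-1))
            * (2^(2*d) * (torusLp p (block P j f)
              * ∑ i ∈ J, torusLp q (block P i g))) :=
          mul_le_mul_right (mul_le_mul_right (mul_le_mul_right h2 _) _) _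
    _ = 2^(2*d) * (((2:ℝ≥0∞) ^ (α * ((j:ℝ)-1)) * torusLp p (block P j f))
            * ((2:ℝ≥0∞) ^ (β * ((j:ℝ)-1)) * (∑ i ∈ J, torusLp q (block P i g)))) := by
          rw [hsplit2]
          ring
    _ ≤ 2^(2*d) * (A * (((2*L+1 : ℕ) : ℝ≥0∞)
            * ((2:ℝ≥0∞) ^ (|β| * (L:ℝ)) * B))) :=
          mul_le_mul_right (mul_le_mul' hAj hSg) _
    _ = K * A * B := by
          rw [hK]
          ring

end
end

section
/- Stopping times and Skorohod convergence: let T > 0 and z^n, z ∈ D([0,T];ℝ) càdlàg with z^n → z in the Skorohod J₁ topology. For R > 0 define τ_R(w) = inf{t ∈ [0,T] : |w_t| ≥ R} (inf ∅ = ∞). Then for every ε > 0: τ_{R−ε}(z) ≤ liminf_n τ_R(z^n) ≤ limsup_n τ_R(z^n) ≤ τ_{R+ε}(z). -/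
open Filter
open scoped ENNReal Topology

noncomputable section

/-- A real-valued path on `[0,T]` is càdlàg: right-continuous with
left limits. -/
def Cadlag (T : ℝ) (w : ℝ → ℝ) : Prop :=
  (∀ t ∈ Set.Ico (0:ℝ) T, ContinuousWithinAt w (Set.Ici t) t) ∧
  (∀ t ∈ Set.Ioc (0:ℝ) T, ∃ l : ℝ, Tendsto w (nhdsWithin t (Set.Iio t)) (nhds l))

/-- Convergence `z_n → z` in the Skorohod `J₁` topology on `D([0,T];ℝ)`:
there are time changes `λ_n` (increasing continuous bijections of `[0,T]`)
with `sup|λ_n(t) − t| → 0` and `sup|z_n(λ_n(t)) − z(t)| → 0`. -/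
def SkorohodTendsto (T : ℝ) (z : ℕ → ℝ → ℝ) (z₀ : ℝ → ℝ) : Prop :=
  ∀ ε > (0:ℝ), ∃ N : ℕ, ∀ n ≥ N, ∃ lam : ℝ → ℝ,
    ContinuousOn lam (Set.Icc 0 T) ∧ StrictMonoOn lam (Set.Icc 0 T) ∧
    lam 0 = 0 ∧ lam T = T ∧
    ∀ t ∈ Set.Icc (0:ℝ) T, |lam t - t| ≤ ε ∧ |z n (lam t) - z₀ t| ≤ ε

/-- First hitting time `τ_R(w) = inf{t ∈ [0,T] : |w_t| ≥ R}` (with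
`inf ∅ = ∞`), valued in `[0,∞]`. -/
def hitTime (T R : ℝ) (w : ℝ → ℝ) : ℝ≥0∞ :=
  ⨅ (t : ℝ) (_ : t ∈ {s : ℝ | 0 ≤ s ∧ s ≤ T ∧ R ≤ |w s|}), ENNReal.ofReal t

lemma ennreal_le_aux (a b : ℝ≥0∞) (ε₀ : ℝ) (hε₀ : 0 < ε₀)
    (h : ∀ δ : ℝ, 0 < δ → δ ≤ ε₀ → a ≤ b + ENNReal.ofReal δ) : a ≤ b := by
  refine ENNReal.le_of_forall_pos_le_add fun η hη hb => ?_
  calc a ≤ b + ENNReal.ofReal (min (η:ℝ) ε₀) :=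
        h _ (lt_min (by exact_mod_cast hη) hε₀) (min_le_right _ _)
    _ ≤ b + η := by
        gcongr
        calc ENNReal.ofReal (min (η:ℝ) ε₀) ≤ ENNReal.ofReal η :=
              ENNReal.ofReal_le_ofReal (min_le_left _ _)
          _ = η := ENNReal.ofReal_coe_nnreal

lemma hitTime_le {T R : ℝ} {w : ℝ → ℝ} {t : ℝ} (h0 : 0 ≤ t) (hT : t ≤ T)
    (hR : R ≤ |w t|) : hitTime T R w ≤ ENNReal.ofReal t :=
  iInf₂_le t ⟨h0, hT, hR⟩

/-- Stopping times and Skorohod convergence: if càdlàg paths `z^n → z` in the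
Skorohod topology on `[0,T]`, then for every `ε > 0`,
`τ_{R−ε}(z) ≤ liminf_n τ_R(z^n) ≤ limsup_n τ_R(z^n) ≤ τ_{R+ε}(z)`. -/
theorem hitTime_skorohod (T : ℝ) (hT : 0 < T) (R : ℝ) (hR : 0 < R)
    (z : ℕ → ℝ → ℝ) (z₀ : ℝ → ℝ)
    (hz : ∀ n, Cadlag T (z n)) (hz₀ : Cadlag T z₀)
    (hconv : SkorohodTendsto T z z₀) :
    ∀ ε > (0:ℝ),
      hitTime T (R - ε) z₀ ≤ Filter.liminf (fun n => hitTime T R (z n)) atTop ∧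
      Filter.limsup (fun n => hitTime T R (z n)) atTop ≤ hitTime T (R + ε) z₀ := by
  intro ε hε
  constructor
  · -- liminf bound
    refine ennreal_le_aux _ _ ε hε fun δ hδ hδε => ?_
    obtain ⟨N, hN⟩ := hconv δ hδ
    rw [← tsub_le_iff_right]
    refine le_liminf_of_le (by isBoundedDefault) (eventually_atTop.2 ⟨N, fun n hn => ?_⟩)
    obtain ⟨lam, hcont, hmono, hl0, hlT, hbd⟩ := hN n hn
    refine le_iInf₂ fun s hs => ?_
    obtain ⟨hs0, hsT, hsR⟩ := hs
    obtain ⟨t, ht, hlt⟩ := intermediate_value_Icc hT.le hcont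
      (by rw [hl0, hlT]; exact ⟨hs0, hsT⟩)
    obtain ⟨hb1, hb2⟩ := hbd t ht
    rw [hlt] at hb1 hb2
    rw [tsub_le_iff_right]
    have h1 : R - ε ≤ |z₀ t| := by
      have := abs_sub_abs_le_abs_sub (z n s) (z₀ t)
      linarith
    have h3 : t ≤ s + δ := by
      have := abs_le.mp hb1
      linarith [this.1]
    calc hitTime T (R - ε) z₀ ≤ ENNReal.ofReal t := hitTime_le ht.1 ht.2 h1
      _ ≤ ENNReal.ofReal (s + δ) := ENNReal.ofReal_le_ofReal h3
      _ ≤ ENNReal.ofReal s + ENNReal.ofReal δ := ENNReal.ofReal_add_le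
  · -- limsup bound
    refine ennreal_le_aux _ _ ε hε fun δ hδ hδε => ?_
    obtain ⟨N, hN⟩ := hconv δ hδ
    rw [← tsub_le_iff_right]
    refine le_iInf₂ fun t ht => ?_
    obtain ⟨ht0, htT, htR⟩ := ht
    rw [tsub_le_iff_right]
    refine limsup_le_of_le (by isBoundedDefault) (eventually_atTop.2 ⟨N, fun n hn => ?_⟩)
    obtain ⟨lam, hcont, hmono, hl0, hlT, hbd⟩ := hN n hn
    obtain ⟨hb1, hb2⟩ := hbd t ⟨ht0, htT⟩
    have hlam0 : 0 ≤ lam t := by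
      rw [← hl0]
      exact hmono.monotoneOn ⟨le_refl 0, hT.le⟩ ⟨ht0, htT⟩ ht0
    have hlamT : lam t ≤ T := by
      rw [← hlT]
      exact hmono.monotoneOn ⟨ht0, htT⟩ ⟨hT.le, le_refl T⟩ htT
    have h1 : R ≤ |z n (lam t)| := by
      have := abs_sub_abs_le_abs_sub (z₀ t) (z n (lam t))
      rw [abs_sub_comm] at this
      linarith
    have h3 : lam t ≤ t + δ := by
      have := abs_le.mp hb1
      linarith [this.2]
    calc hitTime T R (z n) ≤ ENNReal.ofReal (lam t) := hitTime_le hlam0 hlamT h1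
      _ ≤ ENNReal.ofReal (t + δ) := ENNReal.ofReal_le_ofReal h3
      _ ≤ ENNReal.ofReal t + ENNReal.ofReal δ := ENNReal.ofReal_add_le


end
end
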